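/- arXiv:1610.07762 — 2 statements merged into one kernel-verified Lean document; each statement's English description precedes it below -/
import Mathlib

section
/- Under the assumptions of the previous setting (μ₁, μ₂ > 0, c₁, c₂ > 0 solving μ₁c₁² + βc₂² = 1 and βc₁² + μ₂c₂² = 1), the two eigenvalues of M = [[3μ₁c₁² + βc₂², 2βc₁c₂],[2βc₁c₂, 3μ₂c₂² + βc₁²]] are λ_{1,2} = (6 - 2β(c₁²+c₂²) ± 2β(c₁²+c₂²))/2, i.e., λ₁ = 3 and λ₂ = 3 - 2β(c₁² + c₂²). -/
open Matrix

theorem eigenvalues_of_linearization_matrix (μ₁ μ₂ β c₁ c₂ : ℝ)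
    (hμ₁ : 0 < μ₁) (hμ₂ : 0 < μ₂) (hc₁ : 0 < c₁) (hc₂ : 0 < c₂)
    (heq₁ : μ₁ * c₁ ^ 2 + β * c₂ ^ 2 = 1) (heq₂ : β * c₁ ^ 2 + μ₂ * c₂ ^ 2 = 1) :
    ∀ lam : ℝ,
      Matrix.det
          (!![3 * μ₁ * c₁ ^ 2 + β * c₂ ^ 2 - lam, 2 * β * c₁ * c₂;
              2 * β * c₁ * c₂, 3 * μ₂ * c₂ ^ 2 + β * c₁ ^ 2 - lam]) = 0 ↔
        lam = 3 ∨ lam = 3 - 2 * β * (c₁ ^ 2 + c₂ ^ 2) := by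
  intro lam
  rw [Matrix.det_fin_two_of]
  have key : (3 * μ₁ * c₁ ^ 2 + β * c₂ ^ 2 - lam) * (3 * μ₂ * c₂ ^ 2 + β * c₁ ^ 2 - lam)
      - 2 * β * c₁ * c₂ * (2 * β * c₁ * c₂)
      = (3 - lam) * (3 - lam - 2 * β * (c₁ ^ 2 + c₂ ^ 2)) := by
    linear_combination 3 * (3 * μ₂ * c₂ ^ 2 + β * c₁ ^ 2 - lam) * heq₁ +
      3 * (3 - 2 * β * c₂ ^ 2 - lam) * heq₂
  rw [key, mul_eq_zero]
  constructor
  · rintro (h | h)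
    · left; linarith
    · right; linarith
  · rintro (rfl | rfl)
    · left; ring
    · right; ring
end

section
/- Let q ≥ 2 and f(s) = (max(s,0))^q. Then there exists C > 0 such that for all a, b₁, b₂ ∈ ℝ: |f(a+b₁) - f(a) - f'(a)b₁ - (f(a+b₂) - f(a) - f'(a)b₂)| ≤ C (|a| + |b₁| + |b₂|)^{q-2} (|b₁| + |b₂|) |b₁ - b₂|, where f'(s) = q (max(s,0))^{q-1}. -/
/-!
The Taylor remainder `b ↦ f (a + b) - f a - f' a * b` of `f s = (s⁺) ^ q` has derivative
`f' (a + b) - f' a`. Since `f' s = q (s⁺) ^ (q - 1)` and `x ↦ x ^ (q - 1)` is Lipschitz on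
`[0, M]` with constant `(q - 1) M ^ (q - 2)`, this derivative is at most
`q (q - 1) (|a| + |b₁| + |b₂|) ^ (q - 2) (|b₁| + |b₂|)` between `b₂` and `b₁`, and the mean
value theorem gives the bound with `C = q (q - 1)`.
-/

open Set

theorem Real.abs_rpow_sub_rpow_le {p x y : ℝ} (hp : 1 ≤ p) (hx : 0 ≤ x) (hy : 0 ≤ y) :
    |x ^ p - y ^ p| ≤ p * max x y ^ (p - 1) * |x - y| := by
  have hderiv_le : ∀ t ∈ uIcc y x, ‖p * t ^ (p - 1)‖ ≤ p * max x y ^ (p - 1) := by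
    intro t ht
    have ht0 : 0 ≤ t := le_min hy hx |>.trans ht.1
    rw [Real.norm_eq_abs, abs_of_nonneg (by positivity), max_comm]
    gcongr
    exact ht.2
  simpa only [Real.norm_eq_abs] using convex_uIcc y x |>.norm_image_sub_le_of_norm_hasDerivWithin_le
    (fun t _ => (Real.hasDerivAt_rpow_const (Or.inr hp)).hasDerivWithinAt) hderiv_le
    left_mem_uIcc right_mem_uIcc

theorem abs_max_zero_rpow_sub_le {p : ℝ} (hp : 1 ≤ p) (x y : ℝ) :
    |max x 0 ^ p - max y 0 ^ p| ≤ p * max |x| |y| ^ (p - 1) * |x - y| := by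
  have hmax : max (max x 0) (max y 0) ≤ max |x| |y| :=
    max_le_max (max_le (le_abs_self x) (abs_nonneg x)) (max_le (le_abs_self y) (abs_nonneg y))
  calc |max x 0 ^ p - max y 0 ^ p|
      ≤ p * max (max x 0) (max y 0) ^ (p - 1) * |max x 0 - max y 0| :=
        Real.abs_rpow_sub_rpow_le hp (le_max_right x 0) (le_max_right y 0)
    _ ≤ p * max |x| |y| ^ (p - 1) * |x - y| := by
        gcongr p * ?_ ^ _ * ?_
        exact abs_max_sub_max_le_abs x y 0

theorem hasDerivAt_max_zero_rpow {p : ℝ} (hp : 1 < p) (s : ℝ) :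
    HasDerivAt (fun t => max t 0 ^ p) (p * max s 0 ^ (p - 1)) s := by
  rcases lt_trichotomy s 0 with hs | rfl | hs
  · have hconst : (fun t => max t 0 ^ p) =ᶠ[nhds s] fun _ => 0 ^ p := by
      filter_upwards [Iio_mem_nhds hs] with t ht
      rw [max_eq_right ht.le]
    rw [max_eq_right hs.le, Real.zero_rpow (by linarith), mul_zero]
    exact (hasDerivAt_const s _).congr_of_eventuallyEq hconst
  · have hleft : HasDerivWithinAt (fun t => max t 0 ^ p) (p * max 0 0 ^ (p - 1)) (Iic 0) 0 := by
      rw [max_self, Real.zero_rpow (by linarith), mul_zero]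
      exact (hasDerivWithinAt_const 0 _ (0 ^ p)).congr (fun t ht => by rw [max_eq_right ht]) (by simp)
    have hright : HasDerivWithinAt (fun t => max t 0 ^ p) (p * max 0 0 ^ (p - 1)) (Ici 0) 0 := by
      rw [max_self]
      exact (Real.hasDerivAt_rpow_const (Or.inr hp.le)).hasDerivWithinAt.congr
        (fun t ht => by rw [max_eq_left ht]) (by simp)
    simpa only [Iic_union_Ici, hasDerivWithinAt_univ] using hleft.union hright
  · have hpow : (fun t => max t 0 ^ p) =ᶠ[nhds s] fun t => t ^ p := by
      filter_upwards [Ioi_mem_nhds hs] with t ht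
      rw [max_eq_left ht.le]
    rw [max_eq_left hs.le]
    exact (Real.hasDerivAt_rpow_const (Or.inl hs.ne')).congr_of_eventuallyEq hpow

theorem abs_taylor_remainder_sub_le {f f' : ℝ → ℝ} (hf : ∀ x, HasDerivAt f (f' x) x)
    {a b₁ b₂ K : ℝ} (hK : ∀ b ∈ uIcc b₂ b₁, |f' (a + b) - f' a| ≤ K) :
    |(f (a + b₁) - f a - f' a * b₁) - (f (a + b₂) - f a - f' a * b₂)| ≤ K * |b₁ - b₂| := by
  have hderiv : ∀ b, HasDerivAt (fun b => f (a + b) - f a - f' a * b) (f' (a + b) - f' a) b :=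
    fun b => (((hf (a + b)).comp_const_add a b).sub_const (f a)).sub (hasDerivAt_const_mul (f' a))
  simpa only [Real.norm_eq_abs] using convex_uIcc b₂ b₁ |>.norm_image_sub_le_of_norm_hasDerivWithin_le
    (fun b _ => (hderiv b).hasDerivWithinAt) hK left_mem_uIcc right_mem_uIcc

theorem positive_part_power_taylor_difference (q : ℝ) (hq : 2 ≤ q) :
    ∃ C > 0, ∀ a b₁ b₂ : ℝ,
      |((max (a + b₁) 0) ^ q - (max a 0) ^ q - q * (max a 0) ^ (q - 1) * b₁) -
          ((max (a + b₂) 0) ^ q - (max a 0) ^ q - q * (max a 0) ^ (q - 1) * b₂)| ≤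
        C * (|a| + |b₁| + |b₂|) ^ (q - 2) * (|b₁| + |b₂|) * |b₁ - b₂| := by
  refine ⟨q * (q - 1), by nlinarith, fun a b₁ b₂ => ?_⟩
  refine abs_taylor_remainder_sub_le (f := fun t => max t 0 ^ q)
    (hasDerivAt_max_zero_rpow (by linarith)) fun b hb => ?_
  have hbY : |b| ≤ |b₁| + |b₂| := abs_le.2 <| uIcc_subset_Icc
    (abs_le.1 (by linarith [abs_nonneg b₁])) (abs_le.1 (by linarith [abs_nonneg b₂])) hb
  have hmaxX : max |a + b| |a| ≤ |a| + |b₁| + |b₂| :=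
    max_le (by linarith [abs_add_le a b]) (by linarith [abs_nonneg b₁, abs_nonneg b₂])
  calc |q * max (a + b) 0 ^ (q - 1) - q * max a 0 ^ (q - 1)|
      = q * |max (a + b) 0 ^ (q - 1) - max a 0 ^ (q - 1)| := by
        rw [← mul_sub, abs_mul, abs_of_nonneg (by linarith)]
    _ ≤ q * ((q - 1) * max |a + b| |a| ^ (q - 1 - 1) * |a + b - a|) := by
        gcongr
        exact abs_max_zero_rpow_sub_le (by linarith) _ _
    _ ≤ q * ((q - 1) * (|a| + |b₁| + |b₂|) ^ (q - 2) * (|b₁| + |b₂|)) := by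
        rw [add_sub_cancel_left, show q - 1 - 1 = q - 2 by ring]
        gcongr
        · exact mul_nonneg (by linarith) (by positivity)
        · linarith
    _ = q * (q - 1) * (|a| + |b₁| + |b₂|) ^ (q - 2) * (|b₁| + |b₂|) := by ring
end
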